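/- Let Y be a subspace of X and suppose Y_{lcs}^# is a linear subspace of X*. Then any two elements f₁, f₂ ∈ Y_{lcs}^# with f₁|_Y = f₂|_Y are equal; in particular, for every f ∈ Y* and every μ ∈ 𝒫 there is at most one f̃ ∈ Y^#_μ with f̃|_Y = f. -/

import Mathlib

/-!
Since `Y_{lcs}^#` is a subspace, the difference of two of its elements agreeing on `Y` lies in some
`Y^#_μ`, so its `χ_μ` equals `χ_μ^Y(0) = 0`. A functional with `χ_μ = 0` vanishes on the unit ball
of `μ`, which is absorbing, hence vanishes identically.
-/

open scoped ENNReal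

noncomputable section

/-- `χ_ρ(g) = sup { |g v| : ρ v ≤ 1 } ∈ [0,∞]`. -/
def chi {V : Type*} [AddCommGroup V] [Module ℝ V] [TopologicalSpace V]
    (ρ : V → ℝ) (g : V →L[ℝ] ℝ) : ℝ≥0∞ :=
  ⨆ v ∈ {v : V | ρ v ≤ 1}, ENNReal.ofReal |g v|

/-- `χ_ρ^W(f)` for a functional `f` on a subspace `W`. -/
def chiSub {V : Type*} [AddCommGroup V] [Module ℝ V] [TopologicalSpace V]
    (W : Submodule ℝ V) (ρ : V → ℝ) (f : W →L[ℝ] ℝ) : ℝ≥0∞ :=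
  chi (fun w : W => ρ (w : V)) f

/-- `Y^#_μ = {f ∈ X* : χ_ρ^X(f) = χ_ρ^Y(f|_Y) < ∞ for all ρ ∈ 𝒫_μ}`. -/
def sharpMu {X : Type*} [AddCommGroup X] [Module ℝ X] [TopologicalSpace X]
    {ι : Type*} (p : SeminormFamily ℝ X ι) (Y : Submodule ℝ X) (i : ι) :
    Set (X →L[ℝ] ℝ) :=
  {f | ∀ j, p i ≤ p j →
    chi (⇑(p j)) f = chiSub Y (⇑(p j)) (f.comp Y.subtypeL) ∧ chi (⇑(p j)) f < ⊤}

/-- `Y_{lcs}^# = ⋃_{μ ∈ 𝒫} Y^#_μ`. -/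
def sharpLcs {X : Type*} [AddCommGroup X] [Module ℝ X] [TopologicalSpace X]
    {ι : Type*} (p : SeminormFamily ℝ X ι) (Y : Submodule ℝ X) :
    Set (X →L[ℝ] ℝ) :=
  ⋃ i, sharpMu p Y i

lemma chi_zero {V : Type*} [AddCommGroup V] [Module ℝ V] [TopologicalSpace V] (ρ : V → ℝ) :
    chi ρ (0 : V →L[ℝ] ℝ) = 0 := by
  simp [chi]

lemma eq_zero_of_chi_eq_zero {X : Type*} [AddCommGroup X] [Module ℝ X] [TopologicalSpace X]
    (q : Seminorm ℝ X) {g : X →L[ℝ] ℝ} (h : chi q g = 0) : g = 0 := by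
  simp only [chi, Set.mem_ofPred_eq, ENNReal.iSup_eq_zero, ENNReal.ofReal_eq_zero,
    abs_nonpos_iff] at h
  ext x
  set c := q x + 1
  have hc : 0 < c := by positivity
  have hx : q (c⁻¹ • x) ≤ 1 := by
    rw [map_smul_eq_mul, Real.norm_eq_abs, abs_of_pos (inv_pos.2 hc), inv_mul_le_iff₀ hc]
    linarith
  simpa [hc.ne'] using h _ hx

section

variable {X : Type*} [AddCommGroup X] [Module ℝ X] [TopologicalSpace X]
  {ι : Type*} {p : SeminormFamily ℝ X ι} {Y : Submodule ℝ X}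

lemma eq_zero_of_mem_sharpMu_of_comp_subtypeL_eq_zero {i : ι} {f : X →L[ℝ] ℝ}
    (hf : f ∈ sharpMu p Y i) (hY : f.comp Y.subtypeL = 0) : f = 0 :=
  eq_zero_of_chi_eq_zero (p i) <| by
    rw [(hf i le_rfl).1, hY, chiSub, chi_zero]

lemma injOn_comp_subtypeL_sharpLcs {S : Submodule ℝ (X →L[ℝ] ℝ)}
    (hS : (S : Set (X →L[ℝ] ℝ)) = sharpLcs p Y) :
    Set.InjOn (fun f : X →L[ℝ] ℝ => f.comp Y.subtypeL) (sharpLcs p Y) := by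
  intro f₁ h₁ f₂ h₂ hres
  rw [← hS] at h₁ h₂
  have hsub : f₁ - f₂ ∈ sharpLcs p Y := hS ▸ S.sub_mem h₁ h₂
  obtain ⟨i, hi⟩ := Set.mem_iUnion.mp hsub
  refine sub_eq_zero.mp (eq_zero_of_mem_sharpMu_of_comp_subtypeL_eq_zero hi ?_)
  rw [ContinuousLinearMap.sub_comp, sub_eq_zero]
  exact hres

end

theorem statement13_general {X : Type*} [AddCommGroup X] [Module ℝ X] [TopologicalSpace X]
    {ι : Type*} (p : SeminormFamily ℝ X ι) (Y : Submodule ℝ X)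
    (hlin : ∃ S : Submodule ℝ (X →L[ℝ] ℝ), (S : Set (X →L[ℝ] ℝ)) = sharpLcs p Y) :
    (∀ f₁ ∈ sharpLcs p Y, ∀ f₂ ∈ sharpLcs p Y,
      f₁.comp Y.subtypeL = f₂.comp Y.subtypeL → f₁ = f₂) ∧
    (∀ (f : Y →L[ℝ] ℝ) (i : ι), ∀ g₁ ∈ sharpMu p Y i, ∀ g₂ ∈ sharpMu p Y i,
      g₁.comp Y.subtypeL = f → g₂.comp Y.subtypeL = f → g₁ = g₂) := by
  obtain ⟨S, hS⟩ := hlin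
  have hinj := injOn_comp_subtypeL_sharpLcs hS
  refine ⟨fun f₁ h₁ f₂ h₂ hres => hinj h₁ h₂ hres, ?_⟩
  intro f i g₁ h₁ g₂ h₂ hf₁ hf₂
  exact hinj (Set.mem_iUnion_of_mem i h₁) (Set.mem_iUnion_of_mem i h₂) (hf₁.trans hf₂.symm)

theorem statement13 {X : Type*} [AddCommGroup X] [Module ℝ X] [TopologicalSpace X]
    {ι : Type*} [Nonempty ι] (p : SeminormFamily ℝ X ι) (hp : WithSeminorms p)
    (hdir : Directed (· ≤ ·) p) (Y : Submodule ℝ X)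
    (hlin : ∃ S : Submodule ℝ (X →L[ℝ] ℝ), (S : Set (X →L[ℝ] ℝ)) = sharpLcs p Y) :
    (∀ f₁ ∈ sharpLcs p Y, ∀ f₂ ∈ sharpLcs p Y,
      f₁.comp Y.subtypeL = f₂.comp Y.subtypeL → f₁ = f₂) ∧
    (∀ (f : Y →L[ℝ] ℝ) (i : ι), ∀ g₁ ∈ sharpMu p Y i, ∀ g₂ ∈ sharpMu p Y i,
      g₁.comp Y.subtypeL = f → g₂.comp Y.subtypeL = f → g₁ = g₂) :=
  statement13_general p Y hlin
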